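/- arXiv:1107.2082 — 5 statements merged into one kernel-verified Lean document; each statement's English description precedes it below -/
import Mathlib

section
/- Let Λ = ℤ^n (n ≥ 1) and let 𝓛 be a Lie algebra in the class 𝒢'(Λ). Then the subgroup of Λ generated by Π is all of Λ, and the set Σ is nonempty. -/
/-!
If `c : Λ → M` is additive along nonzero brackets and vanishes at `0` and on `Π`, then the
components `𝓛_λ` with `c λ ≠ 0`, together with the brackets `⁅𝓛_λ, 𝓛_μ⁆` with `c λ ≠ 0` and
`c λ + c μ = 0`, span a graded ideal. It misses `𝓛_0`: a nonzero bracket of degree `0` would put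
`λ` in `Π`. By simplicity the ideal is `0`, so `c` vanishes on the support.

Applied to the quotient map `Λ → Λ ⧸ ⟨Π⟩` this shows that `Π` generates `Λ`, because the support
does. Applied to `l`, which is additive along nonzero brackets by the Jacobi identity, it shows
that `Σ = ∅` would make `L₀` central, which a simple graded Lie algebra does not allow.
-/

namespace LieOnLattice

variable {n : ℕ} {L : Type*} [LieRing L] [LieAlgebra ℂ L]

/-- A `ℤ^n`-graded Lie algebra structure on `L`. -/
structure GradedLie (n : ℕ) (L : Type*) [LieRing L] [LieAlgebra ℂ L] where
  G : (Fin n → ℤ) → Submodule ℂ L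
  internal : DirectSum.IsInternal G
  bracket_mem : ∀ (lam mu : Fin n → ℤ) (x y : L),
    x ∈ G lam → y ∈ G mu → ⁅x, y⁆ ∈ G (lam + mu)

def GradedLie.IsGradedIdeal (D : GradedLie n L) (I : LieIdeal ℂ L) : Prop :=
  (I : Submodule ℂ L) = ⨆ lam, (I : Submodule ℂ L) ⊓ D.G lam

def GradedLie.SimpleGraded (D : GradedLie n L) : Prop :=
  (∃ x y : L, ⁅x, y⁆ ≠ 0) ∧ ∀ I : LieIdeal ℂ L, D.IsGradedIdeal I → I = ⊥ ∨ I = ⊤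

/-- The support of the gradation. -/
def GradedLie.Supp (D : GradedLie n L) : Set (Fin n → ℤ) := {lam | D.G lam ≠ ⊥}

/-- The class 𝒢': simple graded, homogeneous components of dimension at most one,
`dim 𝓛₀ = 1`, and the support generates the lattice. -/
def GradedLie.InClassG' (D : GradedLie n L) : Prop :=
  D.SimpleGraded ∧ (∀ lam, Module.rank ℂ (D.G lam) ≤ 1) ∧
    Module.finrank ℂ (D.G 0) = 1 ∧ AddSubgroup.closure D.Supp = ⊤

/-- The set Π of `α` with `±α` in the support and `⁅𝓛_α, 𝓛_{-α}⁆ ≠ 0`. -/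
def GradedLie.PiSet (D : GradedLie n L) : Set (Fin n → ℤ) :=
  {α | α ∈ D.Supp ∧ -α ∈ D.Supp ∧ ∃ x ∈ D.G α, ∃ y ∈ D.G (-α), ⁅x, y⁆ ≠ 0}

/-- The set Σ = {α ∈ Π : l(α) ≠ 0}. -/
def GradedLie.SigmaSet (D : GradedLie n L) (l : (Fin n → ℤ) → ℂ) : Set (Fin n → ℤ) :=
  {α | α ∈ D.PiSet ∧ l α ≠ 0}

namespace GradedLie

variable {M : Type*} (D : GradedLie n L)

theorem mem_supp_of_mem {lam : Fin n → ℤ} {x : L} (hx : x ∈ D.G lam) (hx0 : x ≠ 0) :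
    lam ∈ D.Supp := fun h ↦ hx0 <| (Submodule.mem_bot ℂ).mp (h ▸ hx)

theorem mem_piSet_of_lie_ne_zero {lam mu : Fin n → ℤ} {x y : L} (hx : x ∈ D.G lam)
    (hy : y ∈ D.G mu) (hsum : lam + mu = 0) (hxy : ⁅x, y⁆ ≠ 0) : lam ∈ D.PiSet := by
  obtain rfl : mu = -lam := eq_neg_of_add_eq_zero_right hsum
  refine ⟨D.mem_supp_of_mem hx ?_, D.mem_supp_of_mem hy ?_, x, hx, y, hy, hxy⟩
  · rintro rfl; simp at hxy
  · rintro rfl; simp at hxy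

theorem induction_on {motive : L → Prop} (x : L) (zero : motive 0)
    (add : ∀ x y, motive x → motive y → motive (x + y))
    (homogeneous : ∀ lam, ∀ x ∈ D.G lam, motive x) : motive x :=
  Submodule.iSup_induction D.G (motive := motive)
    (D.internal.submodule_iSup_eq_top ▸ Submodule.mem_top) homogeneous zero add

theorem lie_mem_span_of_homogeneous {S : Set L}
    (hS : ∀ lam, ∀ a ∈ D.G lam, ∀ s ∈ S, ⁅a, s⁆ ∈ Submodule.span ℂ S) (a : L) {z : L}
    (hz : z ∈ Submodule.span ℂ S) : ⁅a, z⁆ ∈ Submodule.span ℂ S := by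
  induction a using D.induction_on with
  | zero => simp
  | add a b ha hb => rw [add_lie]; exact add_mem ha hb
  | homogeneous lam a ha =>
    induction hz using Submodule.span_induction with
    | mem s hs => exact hS lam a ha s hs
    | zero => simp
    | add u v _ _ hu hv => rw [lie_add]; exact add_mem hu hv
    | smul t u _ hu => rw [lie_smul]; exact Submodule.smul_mem _ t hu

variable {D}

theorem SimpleGraded.span_eq_bot_or_eq_top (hD : D.SimpleGraded) {S : Set L}
    (hhom : ∀ s ∈ S, ∃ lam, s ∈ D.G lam)
    (hS : ∀ lam, ∀ a ∈ D.G lam, ∀ s ∈ S, ⁅a, s⁆ ∈ Submodule.span ℂ S) :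
    Submodule.span ℂ S = ⊥ ∨ Submodule.span ℂ S = ⊤ := by
  let I : LieIdeal ℂ L :=
    { Submodule.span ℂ S with lie_mem := fun hz ↦ D.lie_mem_span_of_homogeneous hS _ hz }
  have hgraded : D.IsGradedIdeal I := by
    refine le_antisymm (Submodule.span_le.mpr fun s hs ↦ ?_) (iSup_le fun _ ↦ inf_le_left)
    obtain ⟨lam, hlam⟩ := hhom s hs
    exact Submodule.mem_iSup_of_mem lam ⟨Submodule.subset_span hs, hlam⟩
  exact (hD.2 I hgraded).imp (LieSubmodule.toSubmodule_eq_bot I).mpr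
    (LieSubmodule.toSubmodule_eq_top I).mpr

theorem SimpleGraded.exists_lie_ne_zero (hD : D.SimpleGraded) {lam : Fin n → ℤ} {x : L}
    (hx : x ∈ D.G lam) (hx0 : x ≠ 0) : ∃ a : L, ⁅x, a⁆ ≠ 0 := by
  by_contra! hcentral
  have hspan : ℂ ∙ x = ⊤ := by
    refine (hD.span_eq_bot_or_eq_top (by simpa using ⟨lam, hx⟩) ?_).resolve_left
      (Submodule.span_singleton_eq_bot.not.mpr hx0)
    simp [← lie_skew _ x, hcentral]
  obtain ⟨y, z, hyz⟩ := hD.1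
  obtain ⟨s, rfl⟩ := Submodule.mem_span_singleton.mp (hspan ▸ Submodule.mem_top : y ∈ ℂ ∙ x)
  obtain ⟨t, rfl⟩ := Submodule.mem_span_singleton.mp (hspan ▸ Submodule.mem_top : z ∈ ℂ ∙ x)
  simp at hyz

variable (D)

def IsBracketAdditive [Add M] (c : (Fin n → ℤ) → M) : Prop :=
  ∀ {lam mu : Fin n → ℤ} {x y : L}, x ∈ D.G lam → y ∈ D.G mu → ⁅x, y⁆ ≠ 0 →
    c (lam + mu) = c lam + c mu

theorem isBracketAdditive_addMonoidHom [AddZeroClass M] (φ : (Fin n → ℤ) →+ M) :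
    D.IsBracketAdditive φ :=
  fun _ _ _ ↦ map_add φ _ _

theorem isBracketAdditive_of_lie_eq_smul {L0 : L} {l : (Fin n → ℤ) → ℂ}
    (hl : ∀ (lam : Fin n → ℤ) (x : L), x ∈ D.G lam → ⁅L0, x⁆ = l lam • x) :
    D.IsBracketAdditive l := by
  intro lam mu x y hx hy hxy
  apply smul_left_injective ℂ hxy
  show l (lam + mu) • ⁅x, y⁆ = (l lam + l mu) • ⁅x, y⁆
  rw [← hl _ _ (D.bracket_mem _ _ _ _ hx hy), leibniz_lie, hl _ _ hx, hl _ _ hy, smul_lie,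
    lie_smul, add_smul]

theorem lie_eq_zero_of_lie_eq_smul {L0 : L} {l : (Fin n → ℤ) → ℂ}
    (hl : ∀ (lam : Fin n → ℤ) (x : L), x ∈ D.G lam → ⁅L0, x⁆ = l lam • x)
    (hsupp : ∀ lam ∈ D.Supp, l lam = 0) (a : L) : ⁅L0, a⁆ = 0 := by
  induction a using D.induction_on with
  | zero => exact lie_zero L0
  | add a b ha hb => rw [lie_add, ha, hb, add_zero]
  | homogeneous lam a ha =>
    by_cases ha0 : a = 0
    · rw [ha0, lie_zero]
    · rw [hl lam a ha, hsupp lam (D.mem_supp_of_mem ha ha0), zero_smul]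

section Vanishing

variable [AddZeroClass M] (c : (Fin n → ℤ) → M)

def nonvanishingGens : Set L :=
  {z | ∃ lam, c lam ≠ 0 ∧ z ∈ D.G lam} ∪
    {z | ∃ lam mu x y, x ∈ D.G lam ∧ y ∈ D.G mu ∧ c lam ≠ 0 ∧ c lam + c mu = 0 ∧ ⁅x, y⁆ = z}

variable {D c}

theorem homogeneous_of_mem_nonvanishingGens {z : L} (hz : z ∈ D.nonvanishingGens c) :
    ∃ lam, z ∈ D.G lam := by
  rcases hz with ⟨lam, -, hz⟩ | ⟨lam, mu, x, y, hx, hy, -, -, rfl⟩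
  exacts [⟨lam, hz⟩, ⟨lam + mu, D.bracket_mem _ _ _ _ hx hy⟩]

theorem lie_mem_span_nonvanishingGens_of_left (hc : D.IsBracketAdditive c)
    {lam mu : Fin n → ℤ} {x y : L} (hx : x ∈ D.G lam) (hy : y ∈ D.G mu) (hcx : c lam ≠ 0) :
    ⁅x, y⁆ ∈ Submodule.span ℂ (D.nonvanishingGens c) := by
  by_cases hxy : ⁅x, y⁆ = 0
  · rw [hxy]; exact zero_mem _
  apply Submodule.subset_span
  by_cases hsum : c lam + c mu = 0
  · exact Or.inr ⟨lam, mu, x, y, hx, hy, hcx, hsum, rfl⟩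
  · exact Or.inl ⟨lam + mu, hc hx hy hxy ▸ hsum, D.bracket_mem _ _ _ _ hx hy⟩

theorem lie_mem_span_nonvanishingGens_of_right (hc : D.IsBracketAdditive c)
    {lam mu : Fin n → ℤ} {x y : L} (hx : x ∈ D.G lam) (hy : y ∈ D.G mu) (hcy : c mu ≠ 0) :
    ⁅x, y⁆ ∈ Submodule.span ℂ (D.nonvanishingGens c) := by
  rw [← lie_skew]
  exact neg_mem (lie_mem_span_nonvanishingGens_of_left hc hy hx hcy)

theorem lie_mem_span_nonvanishingGens (hc : D.IsBracketAdditive c) {nu : Fin n → ℤ} {a z : L}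
    (ha : a ∈ D.G nu) (hz : z ∈ D.nonvanishingGens c) :
    ⁅a, z⁆ ∈ Submodule.span ℂ (D.nonvanishingGens c) := by
  rcases hz with ⟨lam, hcz, hz⟩ | ⟨lam, mu, x, y, hx, hy, hcx, hsum, rfl⟩
  · exact lie_mem_span_nonvanishingGens_of_right hc ha hz hcz
  · have hcy : c mu ≠ 0 := fun h ↦ hcx (by rwa [h, add_zero] at hsum)
    rw [leibniz_lie]
    exact add_mem (lie_mem_span_nonvanishingGens_of_right hc (D.bracket_mem _ _ _ _ ha hx) hy hcy)
      (lie_mem_span_nonvanishingGens_of_left hc hx (D.bracket_mem _ _ _ _ ha hy) hcx)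

theorem disjoint_span_nonvanishingGens (hc0 : c 0 = 0) (hPi : ∀ α ∈ D.PiSet, c α = 0) :
    Disjoint (D.G 0) (Submodule.span ℂ (D.nonvanishingGens c)) := by
  classical
  refine (D.internal.submodule_iSupIndep 0).mono_right (Submodule.span_le.mpr ?_)
  rintro z (⟨lam, hcz, hz⟩ | ⟨lam, mu, x, y, hx, hy, hcx, -, rfl⟩)
  · have hlam : lam ≠ 0 := by rintro rfl; exact hcz hc0
    exact Submodule.mem_iSup_of_mem lam (Submodule.mem_iSup_of_mem hlam hz)
  · by_cases hxy : ⁅x, y⁆ = 0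
    · rw [hxy]; exact zero_mem _
    have hsum : lam + mu ≠ 0 := fun h ↦ hcx (hPi lam (D.mem_piSet_of_lie_ne_zero hx hy h hxy))
    exact Submodule.mem_iSup_of_mem _ (Submodule.mem_iSup_of_mem hsum (D.bracket_mem _ _ _ _ hx hy))

theorem SimpleGraded.eq_zero_of_mem_supp (hD : D.SimpleGraded) (h0 : 0 ∈ D.Supp)
    (hc : D.IsBracketAdditive c) (hc0 : c 0 = 0) (hPi : ∀ α ∈ D.PiSet, c α = 0)
    {lam : Fin n → ℤ} (hlam : lam ∈ D.Supp) : c lam = 0 := by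
  have hdisj := disjoint_span_nonvanishingGens hc0 hPi
  rcases hD.span_eq_bot_or_eq_top (fun _ ↦ homogeneous_of_mem_nonvanishingGens)
    (fun _ _ ha _ ↦ lie_mem_span_nonvanishingGens hc ha) with hbot | htop
  · by_contra hcl
    exact hlam (eq_bot_iff.mpr fun x hx ↦ hbot ▸ Submodule.subset_span (Or.inl ⟨lam, hcl, hx⟩))
  · exact absurd (disjoint_top.mp (htop ▸ hdisj)) h0

end Vanishing

end GradedLie

theorem piSet_generates_and_sigmaSet_nonempty_general
    (D : GradedLie n L) (hD : D.InClassG')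
    (L0 : L) (hL0 : L0 ∈ D.G 0) (hL0ne : L0 ≠ 0)
    (l : (Fin n → ℤ) → ℂ)
    (hl : ∀ (lam : Fin n → ℤ) (x : L), x ∈ D.G lam → ⁅L0, x⁆ = l lam • x) :
    AddSubgroup.closure D.PiSet = ⊤ ∧ (D.SigmaSet l).Nonempty := by
  obtain ⟨hsimple : D.SimpleGraded, -, -, hgen⟩ := hD
  have h0 : 0 ∈ D.Supp := D.mem_supp_of_mem hL0 hL0ne
  constructor
  · set H := AddSubgroup.closure D.PiSet
    have hPi : ∀ α ∈ D.PiSet, QuotientAddGroup.mk' H α = 0 := fun α hα ↦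
      (QuotientAddGroup.eq_zero_iff α).mpr (AddSubgroup.subset_closure hα)
    have hsupp : D.Supp ⊆ H := fun lam hlam ↦ (QuotientAddGroup.eq_zero_iff lam).mp <|
      hsimple.eq_zero_of_mem_supp h0 (D.isBracketAdditive_addMonoidHom _) (map_zero _) hPi hlam
    rw [eq_top_iff, ← hgen]
    exact (AddSubgroup.closure_le H).mpr hsupp
  · by_contra hsigma
    have hPi : ∀ α ∈ D.PiSet, l α = 0 := fun α hα ↦ by_contra fun h ↦ hsigma ⟨α, hα, h⟩
    have hl0 : l 0 = 0 := by simpa [hL0ne] using (hl 0 L0 hL0).symm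
    obtain ⟨a, ha⟩ := hsimple.exists_lie_ne_zero hL0 hL0ne
    exact ha <| D.lie_eq_zero_of_lie_eq_smul hl
      (fun _ ↦ hsimple.eq_zero_of_mem_supp h0 (D.isBracketAdditive_of_lie_eq_smul hl) hl0 hPi) a

/-- Lemma 12: Π generates Λ and Σ is nonempty. -/
theorem piSet_generates_and_sigmaSet_nonempty
    (hn : 1 ≤ n)
    (D : GradedLie n L) (hD : D.InClassG')
    (L0 : L) (hL0 : L0 ∈ D.G 0) (hL0ne : L0 ≠ 0)
    (l : (Fin n → ℤ) → ℂ)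
    (hl : ∀ (lam : Fin n → ℤ) (x : L), x ∈ D.G lam → ⁅L0, x⁆ = l lam • x) :
    AddSubgroup.closure D.PiSet = ⊤ ∧ (D.SigmaSet l).Nonempty :=
  piSet_generates_and_sigmaSet_nonempty_general D hD L0 hL0 hL0ne l hl

end LieOnLattice
end

section
/- Let Λ = ℤ^n (n ≥ 1) and let 𝓛 ∈ 𝒢'(Λ) be integrable of type N, normalized so that l takes exactly the integer values −N, …, N. Then either N = 1, or N = 2 and Σ₂ ≠ ∅. -/
namespace LieOnLattice

variable {n : ℕ} {L : Type*} [LieRing L] [LieAlgebra ℂ L]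

/-!
Assume `N ≥ 2`. By graded simplicity, a nonzero vector `x` of top weight `N` is carried into
`𝓛₀` by a chain of brackets with homogeneous elements; take such a chain of minimal length.
The Jacobi identity lets a step be exchanged with its neighbour at the cost of a shorter chain,
which vanishes by minimality, so every step can be moved next to `x`. Hence every step has
negative weight: a positive one overflows the weight bound, and a weight-zero one in front would
yield a shorter chain from another top vector. A chain of length `≥ 2` is impossible: its last
two steps `a, b` commute on the intermediate vector `v`, and the `𝔰𝔩₂`-string computation
`⁅e, ⁅f, v⁆⁆ = κ S v` with `S > 0`, applied to `(e, f) = (⁅a, v⁆, b)` and to `(⁅b, v⁆, a)`,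
contradicts antisymmetry of `⁅⁅a, v⁆, ⁅b, v⁆⁆`. So the chain is a single step and the top weight is
attained on `Π`. Finally, if `⁅x, y⁆ = κ L₀` with `l(x) = N`, applying `ad x` to
`(ad y)² e_α = 0` gives `κ (2 - N) ⁅y, e_α⁆ = 0` with `⁅y, e_α⁆ ≠ 0`, so `N = 2`.
-/

theorem exists_smul_eq_of_rank_le_one {K V : Type*} [Field K] [AddCommGroup V] [Module K V]
    {W : Submodule K V} (hW : Module.rank K W ≤ 1) {x y : V} (hx : x ∈ W) (hy : y ∈ W)
    (hx0 : x ≠ 0) : ∃ c : K, y = c • x := by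
  obtain ⟨v₀, -, hle⟩ := (rank_submodule_le_one_iff W).mp hW
  obtain ⟨a, rfl⟩ := Submodule.mem_span_singleton.mp (hle hx)
  obtain ⟨b, rfl⟩ := Submodule.mem_span_singleton.mp (hle hy)
  have ha : a ≠ 0 := by rintro rfl; exact hx0 (zero_smul K v₀)
  exact ⟨b / a, by rw [smul_smul, div_mul_cancel₀ b ha]⟩

variable {D : GradedLie n L} {L0 : L} {l : (Fin n → ℤ) → ℂ} {N : ℕ}

theorem GradedLie.mem_supp_of_ne_zero {γ : Fin n → ℤ} {x : L} (hx : x ∈ D.G γ) (hx0 : x ≠ 0) :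
    γ ∈ D.Supp :=
  fun h => hx0 (by rwa [h, Submodule.mem_bot] at hx)

section Weights

def IsAdWeight (D : GradedLie n L) (L0 : L) (l : (Fin n → ℤ) → ℂ) : Prop :=
  ∀ (lam : Fin n → ℤ) (x : L), x ∈ D.G lam → ⁅L0, x⁆ = l lam • x

variable {γ μ : Fin n → ℤ} {x y : L}

theorem IsAdWeight.weight_zero (hl : IsAdWeight D L0 l) (hL0 : L0 ∈ D.G 0) (hL0ne : L0 ≠ 0) :
    l 0 = 0 := by
  have h := hl 0 L0 hL0
  rw [lie_self, eq_comm, smul_eq_zero] at h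
  exact h.resolve_right hL0ne

theorem IsAdWeight.weight_add (hl : IsAdWeight D L0 l) (hx : x ∈ D.G γ) (hy : y ∈ D.G μ)
    (hxy : ⁅x, y⁆ ≠ 0) : l (γ + μ) = l γ + l μ := by
  refine smul_left_injective ℂ hxy (show l (γ + μ) • ⁅x, y⁆ = (l γ + l μ) • ⁅x, y⁆ from ?_)
  rw [← hl _ _ (D.bracket_mem _ _ _ _ hx hy), leibniz_lie, hl _ _ hx, hl _ _ hy, smul_lie,
    lie_smul, add_smul]

theorem exists_int_weight
    (hbd : l '' D.Supp ⊆ (fun k : ℤ => (k : ℂ)) '' Set.Icc (-(N : ℤ)) N) (hγ : γ ∈ D.Supp) :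
    ∃ k : ℤ, l γ = k ∧ -(N : ℤ) ≤ k ∧ k ≤ N := by
  obtain ⟨k, ⟨hk1, hk2⟩, hk⟩ := hbd ⟨γ, hγ, rfl⟩
  exact ⟨k, hk.symm, hk1, hk2⟩

theorem IsAdWeight.add_mem_Icc_of_lie_ne_zero (hl : IsAdWeight D L0 l)
    (hbd : l '' D.Supp ⊆ (fun k : ℤ => (k : ℂ)) '' Set.Icc (-(N : ℤ)) N)
    (hx : x ∈ D.G γ) (hy : y ∈ D.G μ) {s t : ℤ} (hs : l γ = s) (ht : l μ = t)
    (hxy : ⁅x, y⁆ ≠ 0) : -(N : ℤ) ≤ s + t ∧ s + t ≤ N := by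
  obtain ⟨k, hk, hk1, hk2⟩ :=
    exists_int_weight hbd (D.mem_supp_of_ne_zero (D.bracket_mem _ _ _ _ hx hy) hxy)
  have : (k : ℂ) = (s + t : ℤ) := by rw [← hk, hl.weight_add hx hy hxy, hs, ht, Int.cast_add]
  have : k = s + t := by exact_mod_cast this
  omega

end Weights

section Chains

abbrev BracketChain (n : ℕ) (M : Type*) : Type _ := List ((Fin n → ℤ) × M)

variable {M : Type*}

def chainDeg (s : BracketChain n M) : Fin n → ℤ :=
  (s.map Prod.fst).sum

@[simp] theorem chainDeg_nil : chainDeg ([] : BracketChain n M) = 0 := rfl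

@[simp] theorem chainDeg_cons (p : (Fin n → ℤ) × M) (s : BracketChain n M) :
    chainDeg (p :: s) = p.1 + chainDeg s := by
  simp [chainDeg]

@[simp] theorem chainDeg_append (s t : BracketChain n M) :
    chainDeg (s ++ t) = chainDeg s + chainDeg t := by
  simp [chainDeg]

variable [LieRing M] {x y : M} {p q : (Fin n → ℤ) × M} {s t u : BracketChain n M}

/-- `chainVal x [(γ₁, u₁), …, (γₖ, uₖ)] = ⁅uₖ, … ⁅u₂, ⁅u₁, x⁆⁆ …⁆`. -/
def chainVal (x : M) (s : BracketChain n M) : M :=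
  s.foldl (fun w p => ⁅p.2, w⁆) x

@[simp] theorem chainVal_nil : chainVal x ([] : BracketChain n M) = x := rfl

@[simp] theorem chainVal_cons : chainVal x (p :: s) = chainVal ⁅p.2, x⁆ s := rfl

theorem chainVal_append : chainVal x (s ++ t) = chainVal (chainVal x s) t :=
  List.foldl_append ..

@[simp] theorem chainVal_zero : chainVal (0 : M) s = 0 := by
  induction s with
  | nil => rfl
  | cons p s ih => simp [ih]

theorem chainVal_sub : chainVal (x - y) s = chainVal x s - chainVal y s := by
  induction s generalizing x y with
  | nil => rfl
  | cons p s ih => simp only [chainVal_cons, lie_sub, ih]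

theorem chainVal_swap :
    chainVal x (t ++ q :: p :: u) =
      chainVal x (t ++ p :: q :: u) - chainVal x (t ++ (p.1 + q.1, ⁅q.2, p.2⁆) :: u) := by
  simp only [chainVal_append, chainVal_cons, ← chainVal_sub]
  rw [lie_lie]
  abel_nf

end Chains

def IsHomogChain (D : GradedLie n L) (s : BracketChain n L) : Prop :=
  ∀ p ∈ s, p.2 ∈ D.G p.1

theorem chainVal_mem {γ : Fin n → ℤ} {x : L} {s : BracketChain n L} (hx : x ∈ D.G γ)
    (hs : IsHomogChain D s) : chainVal x s ∈ D.G (γ + chainDeg s) := by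
  induction s generalizing x γ with
  | nil => simpa using hx
  | cons p s ih =>
    have h := ih (D.bracket_mem _ _ _ _ (hs p (by simp)) hx) fun q hq => hs q (by simp [hq])
    rwa [chainVal_cons, chainDeg_cons, add_left_comm, ← add_assoc]

section ChainIdeal

def chainSpan (D : GradedLie n L) (x : L) : Submodule ℂ L :=
  Submodule.span ℂ {w | ∃ s, IsHomogChain D s ∧ chainVal x s = w}

variable {x : L}

theorem chainVal_mem_chainSpan {s : BracketChain n L} (hs : IsHomogChain D s) :
    chainVal x s ∈ chainSpan D x :=
  Submodule.subset_span ⟨s, hs, rfl⟩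

theorem lie_mem_chainSpan (z : L) {w : L} (hw : w ∈ chainSpan D x) : ⁅z, w⁆ ∈ chainSpan D x := by
  induction hw using Submodule.span_induction with
  | mem w hw =>
    obtain ⟨s, hs, rfl⟩ := hw
    have hz : z ∈ ⨆ i, D.G i := by rw [D.internal.submodule_iSup_eq_top]; trivial
    refine Submodule.iSup_induction _ (motive := fun z => ⁅z, chainVal x s⁆ ∈ chainSpan D x) hz
      (fun i u hu => ?_) (by simp) fun a b ha hb => by rw [add_lie]; exact add_mem ha hb
    have h : ⁅u, chainVal x s⁆ = chainVal x (s ++ [(i, u)]) := by rw [chainVal_append]; rfl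
    rw [h]
    exact chainVal_mem_chainSpan fun p hp => by
      rcases List.mem_append.mp hp with hp | hp
      exacts [hs p hp, by simp_all]
  | zero => simp
  | add a b _ _ ha hb => rw [lie_add]; exact add_mem ha hb
  | smul c a _ ha => rw [lie_smul]; exact Submodule.smul_mem _ c ha

def chainIdeal (D : GradedLie n L) (x : L) : LieIdeal ℂ L :=
  { chainSpan D x with lie_mem := fun hw => lie_mem_chainSpan _ hw }

theorem isGradedIdeal_chainIdeal {γ : Fin n → ℤ} (hx : x ∈ D.G γ) :
    D.IsGradedIdeal (chainIdeal D x) := by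
  refine le_antisymm (Submodule.span_le.mpr ?_) (iSup_le fun _ => inf_le_left)
  rintro _ ⟨s, hs, rfl⟩
  exact Submodule.mem_iSup_of_mem (γ + chainDeg s)
    ⟨chainVal_mem_chainSpan hs, chainVal_mem hx hs⟩

theorem chainSpan_le_of_forall_chainVal_eq_zero {γ : Fin n → ℤ} (hx : x ∈ D.G γ)
    (hzero : ∀ s, IsHomogChain D s → γ + chainDeg s = 0 → chainVal x s = 0) :
    chainSpan D x ≤ ⨆ d ∈ {d : Fin n → ℤ | d ≠ 0}, D.G d := by
  refine Submodule.span_le.mpr ?_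
  rintro _ ⟨s, hs, rfl⟩
  by_cases hd : γ + chainDeg s = 0
  · rw [hzero s hs hd]
    exact zero_mem _
  · exact le_biSup (fun d => D.G d) hd (chainVal_mem hx hs)

theorem exists_chainVal_ne_zero (hD : D.SimpleGraded) (hL0 : L0 ∈ D.G 0) (hL0ne : L0 ≠ 0)
    {γ : Fin n → ℤ} (hx : x ∈ D.G γ) (hx0 : x ≠ 0) :
    ∃ s, IsHomogChain D s ∧ γ + chainDeg s = 0 ∧ chainVal x s ≠ 0 := by
  by_contra! hzero
  rcases hD.2 _ (isGradedIdeal_chainIdeal hx) with h | h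
  · have hxI : x ∈ chainIdeal D x := chainVal_mem_chainSpan (s := []) (by simp [IsHomogChain])
    rw [h, LieSubmodule.mem_bot] at hxI
    exact hx0 hxI
  · have hL0I : L0 ∈ chainIdeal D x := h ▸ LieSubmodule.mem_top L0
    have hdisj := D.internal.submodule_iSupIndep.disjoint_biSup (x := 0) (y := {d | d ≠ 0})
      (by simp)
    exact hL0ne (Submodule.disjoint_def.mp hdisj L0 hL0
      (chainSpan_le_of_forall_chainVal_eq_zero hx hzero hL0I))

end ChainIdeal

section String

variable {β δ : Fin n → ℤ} {e f v : L}

theorem iterate_lie_mem (he : e ∈ D.G β) (hv : v ∈ D.G δ) (r : ℕ) :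
    (⁅e, ·⁆)^[r] v ∈ D.G (r • β + δ) := by
  induction r with
  | zero => simpa using hv
  | succ r ih =>
    rw [Function.iterate_succ_apply', succ_nsmul', add_assoc]
    exact D.bracket_mem _ _ _ _ he ih

theorem IsAdWeight.weight_iterate_lie (hl : IsAdWeight D L0 l) (he : e ∈ D.G β)
    (hv : v ∈ D.G δ) {r : ℕ} (hr : (⁅e, ·⁆)^[r] v ≠ 0) : l (r • β + δ) = r * l β + l δ := by
  induction r with
  | zero => simp
  | succ r ih =>
    rw [Function.iterate_succ_apply'] at hr
    have hr' : (⁅e, ·⁆)^[r] v ≠ 0 := fun h => hr (by rw [h, lie_zero])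
    rw [succ_nsmul', add_assoc, hl.weight_add he (iterate_lie_mem he hv r) hr, ih hr']
    push_cast
    ring

variable {m M : ℤ}

theorem IsAdWeight.iterate_lie_eq_zero (hl : IsAdWeight D L0 l)
    (hbd : l '' D.Supp ⊆ (fun k : ℤ => (k : ℂ)) '' Set.Icc (-(N : ℤ)) N)
    (he : e ∈ D.G β) (hm : l β = m) (hm0 : 0 < m) (hv : v ∈ D.G δ) (hM : l δ = M) (hM0 : 0 ≤ M)
    {r : ℕ} (hr : N < r) : (⁅e, ·⁆)^[r] v = 0 := by
  by_contra h
  obtain ⟨k, hk, -, hkN⟩ :=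
    exists_int_weight hbd (D.mem_supp_of_ne_zero (iterate_lie_mem he hv r) h)
  have hk' : (k : ℂ) = (r * m + M : ℤ) := by
    rw [← hk, hl.weight_iterate_lie he hv h, hm, hM]
    push_cast
    ring
  have : k = r * m + M := by exact_mod_cast hk'
  have : (r : ℤ) ≤ r * m := le_mul_of_one_le_right (by positivity) hm0
  omega

variable {κ : ℂ}

/-- Downward induction from the end of the `e`-string through `v`, which the weight bound puts
before step `N + 1`: rank one makes `⁅f, ·⁆` send each vector of the string into the line of the
previous one, and Jacobi with `⁅e, f⁆ = κ L₀` computes the multiple. -/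
theorem IsAdWeight.exists_lie_iterate_succ_eq_smul (hrk : ∀ lam, Module.rank ℂ (D.G lam) ≤ 1)
    (hl : IsAdWeight D L0 l)
    (hbd : l '' D.Supp ⊆ (fun k : ℤ => (k : ℂ)) '' Set.Icc (-(N : ℤ)) N)
    (he : e ∈ D.G β) (hf : f ∈ D.G (-β)) (hef : ⁅e, f⁆ = κ • L0) (hm : l β = m) (hm0 : 0 < m)
    (hv : v ∈ D.G δ) (hM : l δ = M) (hM0 : 0 ≤ M) (r : ℕ) :
    ∃ c : ℤ, 0 ≤ c ∧ ⁅f, (⁅e, ·⁆)^[r + 1] v⁆ = (κ * c) • (⁅e, ·⁆)^[r] v := by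
  set w : ℕ → L := fun r => (⁅e, ·⁆)^[r] v
  have hsucc (r : ℕ) : ⁅e, w r⁆ = w (r + 1) := (Function.iterate_succ_apply' _ _ _).symm
  have htop (r : ℕ) (hr : N < r) : w r = 0 := hl.iterate_lie_eq_zero hbd he hm hm0 hv hM hM0 hr
  suffices key : ∀ d r : ℕ, N ≤ r + d → ∃ c : ℤ, 0 ≤ c ∧ ⁅f, w (r + 1)⁆ = (κ * c) • w r from
    key N r (by omega)
  intro d
  induction d with
  | zero =>
    intro r hr
    exact ⟨0, le_rfl, by simp [htop (r + 1) (by omega)]⟩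
  | succ d ih =>
    intro r hr
    obtain ⟨c, hc, hfc⟩ := ih (r + 1) (by omega)
    by_cases h1 : w (r + 1) = 0
    · exact ⟨0, le_rfl, by simp [h1]⟩
    have h0 : w r ≠ 0 := fun h => h1 (by rw [← hsucc, h, lie_zero])
    have hmem : ⁅f, w (r + 1)⁆ ∈ D.G (r • β + δ) := by
      have := D.bracket_mem _ _ _ _ hf (iterate_lie_mem he hv (r + 1))
      rwa [succ_nsmul', add_assoc, neg_add_cancel_left] at this
    obtain ⟨t, ht⟩ := exists_smul_eq_of_rank_le_one (hrk _) (iterate_lie_mem he hv r) hmem h0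
    have hjac := lie_lie e f (w (r + 1))
    rw [hef, smul_lie, hl _ _ (iterate_lie_mem he hv (r + 1)), smul_smul, ht, lie_smul, hsucc,
      hsucc, hfc, ← sub_smul, hl.weight_iterate_lie he hv h1, hm, hM] at hjac
    refine ⟨(r + 1) * m + M + c, by positivity, ?_⟩
    rw [ht]
    congr 1
    have := smul_left_injective ℂ h1 hjac
    push_cast at this ⊢
    linear_combination -this

theorem IsAdWeight.exists_pos_lie_lie_eq_smul (hrk : ∀ lam, Module.rank ℂ (D.G lam) ≤ 1)
    (hl : IsAdWeight D L0 l)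
    (hbd : l '' D.Supp ⊆ (fun k : ℤ => (k : ℂ)) '' Set.Icc (-(N : ℤ)) N)
    (he : e ∈ D.G β) (hf : f ∈ D.G (-β)) (hef : ⁅e, f⁆ = κ • L0) (hm : l β = m) (hm0 : 0 < m)
    (hv : v ∈ D.G δ) (hM : l δ = M) (hM0 : 0 < M) :
    ∃ S : ℤ, 0 < S ∧ ⁅e, ⁅f, v⁆⁆ = (κ * S) • v := by
  obtain ⟨c, hc, hfc⟩ :=
    hl.exists_lie_iterate_succ_eq_smul hrk hbd he hf hef hm hm0 hv hM hM0.le 0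
  refine ⟨M + c, by omega, ?_⟩
  simp only [zero_add, Function.iterate_one, Function.iterate_zero, id_eq] at hfc
  rw [leibniz_lie, hef, smul_lie, hl _ _ hv, hM, hfc, smul_smul, ← add_smul]
  push_cast
  ring_nf

end String

section Roots

variable {δ μ ν : Fin n → ℤ} {v a b : L}

theorem IsAdWeight.lie_lie_eq_zero_of_commute (hrk : ∀ lam, Module.rank ℂ (D.G lam) ≤ 1)
    (hl : IsAdWeight D L0 l)
    (hbd : l '' D.Supp ⊆ (fun k : ℤ => (k : ℂ)) '' Set.Icc (-(N : ℤ)) N)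
    (hL0 : L0 ∈ D.G 0) (hL0ne : L0 ≠ 0)
    (hv : v ∈ D.G δ) (ha : a ∈ D.G μ) (hb : b ∈ D.G ν) (hdeg : μ + (ν + δ) = 0)
    {s t : ℤ} (hs : l μ = s) (hs0 : s < 0) (ht : l ν = t) (ht0 : t < 0)
    (hcomm : ⁅a, ⁅b, v⁆⁆ = ⁅b, ⁅a, v⁆⁆) : ⁅a, ⁅b, v⁆⁆ = 0 := by
  by_contra hne
  have hbv : ⁅b, v⁆ ≠ 0 := fun h => hne (by rw [h, lie_zero])
  have hav : ⁅a, v⁆ ≠ 0 := fun h => hne (by rw [hcomm, h, lie_zero])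
  have hv0 : v ≠ 0 := fun h => hbv (by rw [h, lie_zero])
  have hbvm := D.bracket_mem _ _ _ _ hb hv
  have havm := D.bracket_mem _ _ _ _ ha hv
  obtain ⟨κ, hκ⟩ := exists_smul_eq_of_rank_le_one (hrk 0) hL0
    (hdeg ▸ D.bracket_mem _ _ _ _ ha hbvm) hL0ne
  have hκ0 : κ ≠ 0 := by rintro rfl; exact hne (by rw [hκ, zero_smul])
  have h1 := hl.weight_add ha hbvm hne
  have h2 := hl.weight_add hb hv hbv
  have h3 := hl.weight_add ha hv hav
  rw [hdeg, hl.weight_zero hL0 hL0ne] at h1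
  have hδ : l δ = (-s - t : ℤ) := by push_cast; linear_combination -h2 - h1 - hs - ht
  have hμδ : l (μ + δ) = (-t : ℤ) := by push_cast; linear_combination h3 - h2 - h1 - ht
  have hνδ : l (ν + δ) = (-s : ℤ) := by push_cast; linear_combination -h1 - hs
  have hb' : b ∈ D.G (-(μ + δ)) := by
    rwa [← eq_neg_of_add_eq_zero_left (show ν + (μ + δ) = 0 by rw [← hdeg]; abel)]
  have ha' : a ∈ D.G (-(ν + δ)) := by rwa [← eq_neg_of_add_eq_zero_left hdeg]
  -- `⁅⁅a, v⁆, ⁅b, v⁆⁆` is both `-κ S₁ • v` and, by antisymmetry, `κ S₂ • v` with `S₁, S₂ > 0`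
  obtain ⟨S₁, hS₁, h₁⟩ := hl.exists_pos_lie_lie_eq_smul hrk hbd havm hb' (κ := -κ)
    (by rw [← lie_skew, ← hcomm, hκ, neg_smul]) hμδ (by omega) hv hδ (by omega)
  obtain ⟨S₂, hS₂, h₂⟩ := hl.exists_pos_lie_lie_eq_smul hrk hbd hbvm ha' (κ := -κ)
    (by rw [← lie_skew, hκ, neg_smul]) hνδ (by omega) hv hδ (by omega)
  have hanti : (-κ * S₁) • v = (κ * S₂) • v := by
    rw [← h₁, ← lie_skew, h₂, ← neg_smul, neg_mul, neg_neg]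
  have hsum : κ * ((S₁ + S₂ : ℤ) : ℂ) = 0 := by
    push_cast
    linear_combination -(smul_left_injective ℂ hv0 hanti)
  have : S₁ + S₂ = 0 := by exact_mod_cast (mul_eq_zero.mp hsum).resolve_left hκ0
  omega

theorem IsAdWeight.eq_two_of_mem_piSet (hrk : ∀ lam, Module.rank ℂ (D.G lam) ≤ 1)
    (hl : IsAdWeight D L0 l)
    (hbd : l '' D.Supp ⊆ (fun k : ℤ => (k : ℂ)) '' Set.Icc (-(N : ℤ)) N)
    (hL0 : L0 ∈ D.G 0) (hL0ne : L0 ≠ 0) (hN : 1 < N) {γ : Fin n → ℤ} (hγ : γ ∈ D.PiSet)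
    (hlγ : l γ = N) {α : Fin n → ℤ} {eα : L} (heα : eα ∈ D.G α) (heα0 : eα ≠ 0)
    (hlα : l α = 1) : N = 2 := by
  obtain ⟨-, -, x, hx, y, hy, hxy⟩ := hγ
  obtain ⟨κ, hκ⟩ := exists_smul_eq_of_rank_le_one (hrk 0) hL0
    (by simpa using D.bracket_mem _ _ _ _ hx hy) hL0ne
  have hκ0 : κ ≠ 0 := by rintro rfl; exact hxy (by rw [hκ, zero_smul])
  have hly : l (-γ) = (-N : ℤ) := by
    have h := hl.weight_add hx hy hxy
    rw [add_neg_cancel, hl.weight_zero hL0 hL0ne, hlγ] at h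
    push_cast
    linear_combination -h
  have hxe : ⁅x, eα⁆ = 0 := by
    by_contra h
    have := hl.add_mem_Icc_of_lie_ne_zero hbd hx heα (s := N) (t := 1) (by simp [hlγ])
      (by simp [hlα]) h
    omega
  have hxye : ⁅x, ⁅y, eα⁆⁆ = κ • eα := by
    rw [leibniz_lie, hκ, hxe, lie_zero, add_zero, smul_lie, hl _ _ heα, hlα, one_smul]
  have hye : ⁅y, eα⁆ ≠ 0 := fun h => by
    rw [h, lie_zero] at hxye
    exact smul_ne_zero hκ0 heα0 hxye.symm
  have hyem := D.bracket_mem _ _ _ _ hy heα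
  have hlye : l (-γ + α) = (1 - N : ℤ) := by
    rw [hl.weight_add hy heα hye, hly, hlα]
    push_cast
    ring
  have hyye : ⁅y, ⁅y, eα⁆⁆ = 0 := by
    by_contra h
    have := hl.add_mem_Icc_of_lie_ne_zero hbd hy hyem hly hlye h
    omega
  -- apply `ad x` to `(ad y)² eα = 0`
  have key : (κ * (2 - N)) • ⁅y, eα⁆ = 0 := by
    have h := congrArg (⁅x, ·⁆) hyye
    simp only [lie_zero] at h
    rw [leibniz_lie, hκ, smul_lie, hl _ _ hyem, hlye, hxye, lie_smul, smul_smul, ← add_smul] at h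
    rw [← h]
    congr 1
    push_cast
    ring
  have h2 : (2 - N : ℂ) = 0 :=
    (mul_eq_zero.mp ((smul_eq_zero.mp key).resolve_right hye)).resolve_left hκ0
  have : (2 : ℤ) - N = 0 := by exact_mod_cast h2
  omega

end Roots

section TopChains

def HasTopChain (D : GradedLie n L) (l : (Fin n → ℤ) → ℂ) (N k : ℕ) : Prop :=
  ∃ (γ : Fin n → ℤ) (x : L) (s : BracketChain n L), x ∈ D.G γ ∧ l γ = N ∧ IsHomogChain D s ∧
    s.length = k ∧ γ + chainDeg s = 0 ∧ chainVal x s ≠ 0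

variable {k : ℕ} {γ : Fin n → ℤ} {x : L}

theorem exists_hasTopChain (hD : D.SimpleGraded) (hL0 : L0 ∈ D.G 0) (hL0ne : L0 ≠ 0)
    (htop : (N : ℂ) ∈ l '' D.Supp) : ∃ k, HasTopChain D l N k := by
  obtain ⟨γ, hγ, hlγ⟩ := htop
  obtain ⟨x, hx, hx0⟩ := (Submodule.ne_bot_iff _).mp hγ
  obtain ⟨s, hs, hdeg, hval⟩ := exists_chainVal_ne_zero hD hL0 hL0ne hx hx0
  exact ⟨s.length, γ, x, s, hx, hlγ, hs, rfl, hdeg, hval⟩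

theorem IsAdWeight.not_hasTopChain_zero (hl : IsAdWeight D L0 l) (hL0 : L0 ∈ D.G 0)
    (hL0ne : L0 ≠ 0) (hN : N ≠ 0) : ¬ HasTopChain D l N 0 := by
  rintro ⟨γ, x, s, -, hlγ, -, hlen, hdeg, -⟩
  rw [List.length_eq_zero_iff] at hlen
  subst hlen
  rw [chainDeg_nil, add_zero] at hdeg
  rw [hdeg, hl.weight_zero hL0 hL0ne] at hlγ
  exact hN (by exact_mod_cast hlγ.symm)

theorem HasTopChain.exists_mem_piSet (h : HasTopChain D l N 1) : ∃ γ ∈ D.PiSet, l γ = N := by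
  obtain ⟨γ, x, s, hx, hlγ, hs, hlen, hdeg, hval⟩ := h
  obtain ⟨p, rfl⟩ := List.length_eq_one_iff.mp hlen
  rw [chainVal_cons, chainVal_nil] at hval
  have hp : p.2 ∈ D.G (-γ) := by
    rw [← eq_neg_of_add_eq_zero_right (by simpa using hdeg)]
    exact hs p (by simp)
  have hxp : ⁅x, p.2⁆ ≠ 0 := by rwa [← lie_skew, neg_ne_zero]
  refine ⟨γ, ⟨D.mem_supp_of_ne_zero hx ?_, D.mem_supp_of_ne_zero hp ?_, x, hx, p.2, hp, hxp⟩, hlγ⟩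
  · rintro rfl; exact hxp (zero_lie _)
  · intro h; exact hxp (by rw [h, lie_zero])

theorem chainVal_eq_zero_of_minimal (hmin : ∀ j < k, ¬ HasTopChain D l N j) (hx : x ∈ D.G γ)
    (hlγ : l γ = N) {s : BracketChain n L} (hs : IsHomogChain D s) (hlen : s.length + 1 = k)
    (hdeg : γ + chainDeg s = 0) : chainVal x s = 0 := by
  by_contra hval
  exact hmin s.length (by omega) ⟨γ, x, s, hx, hlγ, hs, rfl, hdeg, hval⟩

theorem chainVal_swap_of_minimal (hmin : ∀ j < k, ¬ HasTopChain D l N j) (hx : x ∈ D.G γ)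
    (hlγ : l γ = N) {t u : BracketChain n L} {p q : (Fin n → ℤ) × L}
    (hs : IsHomogChain D (t ++ p :: q :: u)) (hlen : (t ++ p :: q :: u).length = k)
    (hdeg : γ + chainDeg (t ++ p :: q :: u) = 0) :
    chainVal x (t ++ p :: q :: u) = chainVal x (t ++ q :: p :: u) := by
  rw [chainVal_swap, sub_eq_self]
  refine chainVal_eq_zero_of_minimal hmin hx hlγ (fun r hr => ?_) ?_ ?_
  · simp only [List.mem_append, List.mem_cons] at hr
    rcases hr with hr | rfl | hr
    · exact hs r (by simp [hr])
    · rw [add_comm]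
      exact D.bracket_mem _ _ _ _ (hs p (by simp)) (hs q (by simp))
    · exact hs r (by simp [hr])
  · simp only [List.length_append, List.length_cons] at hlen ⊢
    omega
  · simp only [chainDeg_append, chainDeg_cons] at hdeg ⊢
    rw [← hdeg]
    abel

theorem chainVal_cons_eq_of_minimal (hmin : ∀ j < k, ¬ HasTopChain D l N j) (hx : x ∈ D.G γ)
    (hlγ : l γ = N) (t : BracketChain n L) {p : (Fin n → ℤ) × L} {u : BracketChain n L}
    (hs : IsHomogChain D (t ++ p :: u)) (hlen : (t ++ p :: u).length = k)
    (hdeg : γ + chainDeg (t ++ p :: u) = 0) :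
    chainVal x (p :: (t ++ u)) = chainVal x (t ++ p :: u) := by
  induction t using List.reverseRecOn generalizing u with
  | nil => rfl
  | append_singleton t q ih =>
    simp only [List.append_assoc, List.singleton_append] at hs hlen hdeg ⊢
    rw [chainVal_swap_of_minimal hmin hx hlγ hs hlen hdeg]
    refine ih (fun r hr => hs r ?_) ?_ ?_
    · simp only [List.mem_append, List.mem_cons] at hr ⊢
      tauto
    · simp only [List.length_append, List.length_cons] at hlen ⊢
      omega
    · simp only [chainDeg_append, chainDeg_cons] at hdeg ⊢
      rw [← hdeg]
      abel

theorem IsAdWeight.exists_weight_neg_of_minimal (hl : IsAdWeight D L0 l)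
    (hbd : l '' D.Supp ⊆ (fun k : ℤ => (k : ℂ)) '' Set.Icc (-(N : ℤ)) N)
    (hmin : ∀ j < k, ¬ HasTopChain D l N j) (hx : x ∈ D.G γ) (hlγ : l γ = N)
    {t : BracketChain n L} {p : (Fin n → ℤ) × L} {u : BracketChain n L}
    (hs : IsHomogChain D (t ++ p :: u)) (hlen : (t ++ p :: u).length = k)
    (hdeg : γ + chainDeg (t ++ p :: u) = 0) (hval : chainVal x (t ++ p :: u) ≠ 0) :
    ∃ m : ℤ, l p.1 = m ∧ m < 0 := by
  rw [← chainVal_cons_eq_of_minimal hmin hx hlγ t hs hlen hdeg, chainVal_cons] at hval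
  have hpx : ⁅p.2, x⁆ ≠ 0 := fun h => hval (by rw [h, chainVal_zero])
  have hp := hs p (by simp)
  obtain ⟨m, hm, -, -⟩ :=
    exists_int_weight hbd (D.mem_supp_of_ne_zero hp fun h => hpx (by rw [h, zero_lie]))
  have hle := hl.add_mem_Icc_of_lie_ne_zero hbd hp hx hm (t := N) (by simp [hlγ]) hpx
  refine ⟨m, hm, lt_of_le_of_ne (by omega) ?_⟩
  rintro rfl
  -- a weight-zero step makes `⁅p.2, x⁆` a top vector reaching `𝓛₀` by a shorter chain
  refine hmin (k - 1) (by rw [List.length_append, List.length_cons] at hlen; omega)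
    ⟨p.1 + γ, ⁅p.2, x⁆, t ++ u, D.bracket_mem _ _ _ _ hp hx, ?_, fun r hr => hs r ?_, ?_, ?_, hval⟩
  · rw [hl.weight_add hp hx hpx, hm, hlγ]
    simp
  · simp only [List.mem_append, List.mem_cons] at hr ⊢
    tauto
  · simp only [List.length_append, List.length_cons] at hlen ⊢
    omega
  · simp only [chainDeg_append, chainDeg_cons] at hdeg ⊢
    rw [← hdeg]
    abel

theorem HasTopChain.length_lt_two (hrk : ∀ lam, Module.rank ℂ (D.G lam) ≤ 1)
    (hl : IsAdWeight D L0 l)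
    (hbd : l '' D.Supp ⊆ (fun k : ℤ => (k : ℂ)) '' Set.Icc (-(N : ℤ)) N)
    (hL0 : L0 ∈ D.G 0) (hL0ne : L0 ≠ 0) (hmin : ∀ j < k, ¬ HasTopChain D l N j)
    (h : HasTopChain D l N k) : k < 2 := by
  obtain ⟨γ, x, s, hx, hlγ, hs, hlen, hdeg, hval⟩ := h
  by_contra! hk
  obtain ⟨t, p, q, rfl⟩ : ∃ t p q, s = t ++ [p, q] := by
    obtain ⟨s', q, rfl⟩ := s.eq_nil_or_concat'.resolve_left (by
      rintro rfl; simp only [List.length_nil] at hlen; omega)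
    obtain ⟨t, p, rfl⟩ := s'.eq_nil_or_concat'.resolve_left (by
      rintro rfl; simp only [List.nil_append, List.length_singleton] at hlen; omega)
    exact ⟨t, p, q, by simp⟩
  obtain ⟨a, ha, ha0⟩ := hl.exists_weight_neg_of_minimal hbd hmin hx hlγ hs hlen hdeg hval
  have hs' : IsHomogChain D ((t ++ [p]) ++ q :: []) := by simpa using hs
  obtain ⟨b, hb, hb0⟩ := hl.exists_weight_neg_of_minimal hbd hmin hx hlγ hs'
    (by simpa using hlen) (by simpa using hdeg) (by simpa using hval)
  have hcomm := chainVal_swap_of_minimal hmin hx hlγ (u := []) hs hlen hdeg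
  simp only [chainVal_append, chainVal_cons, chainVal_nil] at hval hcomm
  refine hval (hl.lie_lie_eq_zero_of_commute hrk hbd hL0 hL0ne
    (chainVal_mem hx fun r hr => hs r (by simp [hr])) (hs q (by simp)) (hs p (by simp)) ?_
    hb hb0 ha ha0 hcomm)
  simp only [chainDeg_append, chainDeg_cons, chainDeg_nil] at hdeg
  rw [← hdeg]
  abel

theorem exists_mem_piSet_weight_eq_top (hD : D.SimpleGraded)
    (hrk : ∀ lam, Module.rank ℂ (D.G lam) ≤ 1) (hl : IsAdWeight D L0 l)
    (hbd : l '' D.Supp ⊆ (fun k : ℤ => (k : ℂ)) '' Set.Icc (-(N : ℤ)) N)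
    (hL0 : L0 ∈ D.G 0) (hL0ne : L0 ≠ 0) (htop : (N : ℂ) ∈ l '' D.Supp) (hN : N ≠ 0) :
    ∃ γ ∈ D.PiSet, l γ = N := by
  classical
  have hex := exists_hasTopChain hD hL0 hL0ne htop
  have hspec := Nat.find_spec hex
  have hlt := hspec.length_lt_two hrk hl hbd hL0 hL0ne fun j => Nat.find_min hex
  obtain h | h : Nat.find hex = 0 ∨ Nat.find hex = 1 := by omega
  · exact absurd (h ▸ hspec) (hl.not_hasTopChain_zero hL0 hL0ne hN)
  · exact (h ▸ hspec).exists_mem_piSet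

end TopChains

theorem type_one_or_type_two_general
    (D : GradedLie n L) (hD : D.InClassG')
    (L0 : L) (hL0 : L0 ∈ D.G 0) (hL0ne : L0 ≠ 0)
    (l : (Fin n → ℤ) → ℂ)
    (hl : ∀ (lam : Fin n → ℤ) (x : L), x ∈ D.G lam → ⁅L0, x⁆ = l lam • x)
    (N : ℕ) (hN : 0 < N)
    (α : Fin n → ℤ) (hα : α ∈ D.SigmaSet l) (hlα : l α = 1)
    (htype : l '' D.Supp = (fun k : ℤ => (k : ℂ)) '' Set.Icc (-(N : ℤ)) (N : ℤ)) :
    N = 1 ∨ (N = 2 ∧ {β | β ∈ D.SigmaSet l ∧ l β = 2}.Nonempty) := by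
  obtain ⟨hsimple, hrk, -, -⟩ := hD
  rcases eq_or_ne N 1 with hN1 | hN1
  · exact Or.inl hN1
  have htop : (N : ℂ) ∈ l '' D.Supp := htype ▸ ⟨N, ⟨by omega, le_rfl⟩, by simp⟩
  obtain ⟨γ, hγ, hlγ⟩ :=
    exists_mem_piSet_weight_eq_top hsimple hrk hl htype.subset hL0 hL0ne htop hN.ne'
  obtain ⟨⟨-, -, eα, heα, _, _, hbr⟩, -⟩ := hα
  have heα0 : eα ≠ 0 := by rintro rfl; exact hbr (zero_lie _)
  have h2 : N = 2 := IsAdWeight.eq_two_of_mem_piSet hrk hl htype.subset hL0 hL0ne (by omega)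
    hγ hlγ heα heα0 hlα
  exact Or.inr ⟨h2, γ, ⟨hγ, by simp [hlγ, h2]⟩, by simp [hlγ, h2]⟩

/-- Lemma 24: an integrable Lie algebra in 𝒢' is of type 1, or of type 2 with `Σ₂ ≠ ∅`. -/
theorem type_one_or_type_two
    (hn : 1 ≤ n)
    (D : GradedLie n L) (hD : D.InClassG')
    (L0 : L) (hL0 : L0 ∈ D.G 0) (hL0ne : L0 ≠ 0)
    (l : (Fin n → ℤ) → ℂ)
    (hl : ∀ (lam : Fin n → ℤ) (x : L), x ∈ D.G lam → ⁅L0, x⁆ = l lam • x)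
    (N : ℕ) (hN : 0 < N)
    (α : Fin n → ℤ) (hα : α ∈ D.SigmaSet l) (hlα : l α = 1)
    (htype : l '' D.Supp = (fun k : ℤ => (k : ℂ)) '' Set.Icc (-(N : ℤ)) (N : ℤ)) :
    N = 1 ∨ (N = 2 ∧ {β | β ∈ D.SigmaSet l ∧ l β = 2}.Nonempty) :=
  type_one_or_type_two_general D hD L0 hL0 hL0ne l hl N hN α hα hlα htype

end LieOnLattice
end

section
/- Let Λ = ℤ^n (n ≥ 1), let l : Λ → ℂ be an additive map, and let S ⊆ Λ be a nonempty quasi-additive subset. Then Q(S) and K(S) are subgroups of Λ. -/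
namespace QuasiAdditive

variable {n : ℕ}

/-- A subset `S` of the lattice is quasi-additive with respect to an additive map `l`:
`l` does not vanish on `S`, `S = -S`, and `S` is closed under addition whenever the sum
is not in the kernel of `l`. -/
def IsQuasiAdditive (l : (Fin n → ℤ) →+ ℂ) (S : Set (Fin n → ℤ)) : Prop :=
  (∀ lam ∈ S, l lam ≠ 0) ∧ (∀ lam ∈ S, -lam ∈ S) ∧
    ∀ lam mu, lam ∈ S → mu ∈ S → l (lam + mu) ≠ 0 → lam + mu ∈ S

/-- `K(S)`: the sums of two elements of `S` on which `l` vanishes. -/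
def Kset (l : (Fin n → ℤ) →+ ℂ) (S : Set (Fin n → ℤ)) : Set (Fin n → ℤ) :=
  {nu | ∃ lam ∈ S, ∃ mu ∈ S, nu = lam + mu ∧ l nu = 0}

/-- `Q(S) = S ∪ K(S)`. -/
def Qset (l : (Fin n → ℤ) →+ ℂ) (S : Set (Fin n → ℤ)) : Set (Fin n → ℤ) :=
  S ∪ Kset l S

lemma SK_mem {l : (Fin n → ℤ) →+ ℂ} {S : Set (Fin n → ℤ)}
    (hS : IsQuasiAdditive l S) :
    ∀ lam ∈ S, ∀ nu ∈ Kset l S, lam + nu ∈ S := by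
  obtain ⟨h0, hneg, hadd⟩ := hS
  intro lam hlam nu hnu
  obtain ⟨a, ha, b, hb, rfl, hl0⟩ := hnu
  have hla := h0 lam hlam
  by_cases h : l (lam + a) = 0
  · have hlb : l (lam + b) ≠ 0 := by
      simp only [map_add] at *
      intro h2
      exact hla (by linear_combination (h + h2 - hl0) / 2)
    have h1 : lam + b ∈ S := hadd lam b hlam hb hlb
    have h2 : l (lam + b + a) ≠ 0 := by
      simp only [map_add] at *
      intro h2
      exact hla (by linear_combination h2 - hl0)
    have := hadd _ a h1 ha h2
    convert this using 1
    abel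
  · have h1 : lam + a ∈ S := hadd lam a hlam ha h
    have h2 : l (lam + a + b) ≠ 0 := by
      simp only [map_add] at *
      intro h2
      exact hla (by linear_combination h2 - hl0)
    have := hadd _ b h1 hb h2
    convert this using 1
    abel

/-- Lemma 56: for a nonempty quasi-additive set `S`, both `Q(S)` and `K(S)` are subgroups. -/
theorem Qset_Kset_subgroups (l : (Fin n → ℤ) →+ ℂ) (S : Set (Fin n → ℤ))
    (hS : IsQuasiAdditive l S) (hne : S.Nonempty) :
    (∃ QS : AddSubgroup (Fin n → ℤ), (QS : Set (Fin n → ℤ)) = Qset l S) ∧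
      (∃ KS : AddSubgroup (Fin n → ℤ), (KS : Set (Fin n → ℤ)) = Kset l S) := by
  obtain ⟨h0, hneg, hadd⟩ := hS
  obtain ⟨s0, hs0⟩ := hne
  have hzero : (0 : Fin n → ℤ) ∈ Kset l S :=
    ⟨s0, hs0, -s0, hneg s0 hs0, by simp, by simp⟩
  have hKneg : ∀ nu ∈ Kset l S, -nu ∈ Kset l S := by
    rintro nu ⟨a, ha, b, hb, rfl, hl0⟩
    exact ⟨-a, hneg a ha, -b, hneg b hb, by abel, by rw [map_neg, hl0, neg_zero]⟩
  have hKadd : ∀ x ∈ Kset l S, ∀ y ∈ Kset l S, x + y ∈ Kset l S := by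
    rintro x hx y ⟨c, hc, d, hd, rfl, hl0⟩
    obtain ⟨a, ha, b, hb, rfl, hl0'⟩ := hx
    have h1 : a + b + c ∈ S := by
      have := SK_mem ⟨h0, hneg, hadd⟩ c hc (a + b) ⟨a, ha, b, hb, rfl, hl0'⟩
      convert this using 1; abel
    refine ⟨a + b + c, h1, d, hd, by abel, ?_⟩
    simp only [map_add] at hl0 hl0' ⊢
    linear_combination hl0' + hl0
  have hQneg : ∀ x ∈ Qset l S, -x ∈ Qset l S := by
    rintro x (hx | hx)
    · exact Or.inl (hneg x hx)
    · exact Or.inr (hKneg x hx)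
  have hQadd : ∀ x ∈ Qset l S, ∀ y ∈ Qset l S, x + y ∈ Qset l S := by
    rintro x (hx | hx) y (hy | hy)
    · by_cases h : l (x + y) = 0
      · exact Or.inr ⟨x, hx, y, hy, rfl, h⟩
      · exact Or.inl (hadd x y hx hy h)
    · exact Or.inl (SK_mem ⟨h0, hneg, hadd⟩ x hx y hy)
    · refine Or.inl ?_
      have := SK_mem ⟨h0, hneg, hadd⟩ y hy x hx
      convert this using 1; abel
    · exact Or.inr (hKadd x hx y hy)
  constructor
  · exact ⟨{ carrier := Qset l S
             zero_mem' := Or.inr hzero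
             add_mem' := fun {a b} ha hb => hQadd a ha b hb
             neg_mem' := fun {a} ha => hQneg a ha }, rfl⟩
  · exact ⟨{ carrier := Kset l S
             zero_mem' := hzero
             add_mem' := fun {a b} ha hb => hKadd a ha b hb
             neg_mem' := fun {a} ha => hKneg a ha }, rfl⟩

end QuasiAdditive
end

section
/- Let Λ = ℤ^n (n ≥ 1), let l : Λ → ℂ be an additive map, and let S, S₁, S₂ ⊆ Λ be quasi-additive subsets with S = S₁ ∪ S₂. Then S = S₁ or S = S₂. -/
namespace QuasiAdditive

variable {n : ℕ}

/-- A quasi-additive set is closed under subtraction when `l` does not vanish on the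
difference. -/
lemma sub_mem_of_isQuasiAdditive (l : (Fin n → ℤ) →+ ℂ) (A : Set (Fin n → ℤ))
    (hA : IsQuasiAdditive l A) {x y : Fin n → ℤ} (hx : x ∈ A) (hy : y ∈ A)
    (hl : l (x - y) ≠ 0) : x - y ∈ A := by
  obtain ⟨-, hneg, hadd⟩ := hA
  have := hadd x (-y) hx (hneg y hy) (by simpa [sub_eq_add_neg] using hl)
  simpa [sub_eq_add_neg] using this

/-- Lemma 57: if a quasi-additive set is the union of two quasi-additive sets, it equals
one of them. -/
theorem quasiAdditive_union (l : (Fin n → ℤ) →+ ℂ) (S S₁ S₂ : Set (Fin n → ℤ))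
    (hS : IsQuasiAdditive l S) (hS₁ : IsQuasiAdditive l S₁) (hS₂ : IsQuasiAdditive l S₂)
    (hunion : S = S₁ ∪ S₂) :
    S = S₁ ∨ S = S₂ := by
  by_contra hcon
  push_neg at hcon
  obtain ⟨hne1, hne2⟩ := hcon
  have hsub1 : S₁ ⊆ S := hunion ▸ Set.subset_union_left
  have hsub2 : S₂ ⊆ S := hunion ▸ Set.subset_union_right
  obtain ⟨lam, hlamS, hlam1⟩ := Set.not_subset.mp
    (fun hs => hne1 (Set.Subset.antisymm hs hsub1))
  obtain ⟨mu, hmuS, hmu2⟩ := Set.not_subset.mp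
    (fun hs => hne2 (Set.Subset.antisymm hs hsub2))
  have hlam2 : lam ∈ S₂ := by
    rcases (hunion ▸ hlamS : lam ∈ S₁ ∪ S₂) with h | h
    · exact absurd h hlam1
    · exact h
  have hmu1 : mu ∈ S₁ := by
    rcases (hunion ▸ hmuS : mu ∈ S₁ ∪ S₂) with h | h
    · exact h
    · exact absurd h hmu2
  have hllam : l lam ≠ 0 := hS.1 lam hlamS
  have hlmu : l mu ≠ 0 := hS.1 mu hmuS
  -- helper for contradiction: subtract within S₁ or S₂
  by_cases hc : l (lam + mu) = 0
  · -- l μ = - l λ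
    -- 2λ ∈ S₂ and S
    have h2l : l (lam + lam) ≠ 0 := by
      rw [map_add]
      simpa [add_self_eq_zero] using hllam
    have h2lam2 : lam + lam ∈ S₂ := hS₂.2.2 lam lam hlam2 hlam2 h2l
    have h2lamS : lam + lam ∈ S := hsub2 h2lam2
    -- 2λ+μ
    have hA : l (lam + lam + mu) ≠ 0 := by
      rw [map_add, map_add]
      intro h0
      apply hllam
      rw [map_add] at hc
      linear_combination h0 - hc
    have hAS : lam + lam + mu ∈ S := hS.2.2 (lam + lam) mu h2lamS hmuS hA
    rcases (hunion ▸ hAS : lam + lam + mu ∈ S₁ ∪ S₂) with hA1 | hA2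
    · -- 2λ ∈ S₁ via (2λ+μ) - μ... then 3λ, 3λ+μ
      have e1 : lam + lam + mu - mu = lam + lam := by abel
      have h2lam1 : lam + lam ∈ S₁ := by
        have := sub_mem_of_isQuasiAdditive l S₁ hS₁ hA1 hmu1 (by rw [e1]; exact h2l)
        rwa [e1] at this
      have h3l : l (lam + lam + lam) ≠ 0 := by
        rw [map_add, map_add]
        intro h0
        apply hllam
        linear_combination h0 / 3
      have h3S : lam + lam + lam ∈ S := hS.2.2 (lam + lam) lam h2lamS hlamS h3l
      rcases (hunion ▸ h3S : lam + lam + lam ∈ S₁ ∪ S₂) with h31 | h32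
      · have e2 : lam + lam + lam - (lam + lam) = lam := by abel
        have := sub_mem_of_isQuasiAdditive l S₁ hS₁ h31 h2lam1 (by rw [e2]; exact hllam)
        rw [e2] at this
        exact hlam1 this
      · have h4l : l (lam + lam + lam + mu) ≠ 0 := by
          rw [map_add, map_add, map_add]
          intro h0
          apply hllam
          rw [map_add] at hc
          linear_combination (h0 - hc) / 2
        have h4S : lam + lam + lam + mu ∈ S :=
          hS.2.2 (lam + lam + lam) mu (hsub2 h32) hmuS h4l
        rcases (hunion ▸ h4S : lam + lam + lam + mu ∈ S₁ ∪ S₂) with h41 | h42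
        · have e3 : lam + lam + lam + mu - (lam + lam + mu) = lam := by abel
          have := sub_mem_of_isQuasiAdditive l S₁ hS₁ h41 hA1 (by rw [e3]; exact hllam)
          rw [e3] at this
          exact hlam1 this
        · have e4 : lam + lam + lam + mu - (lam + lam + lam) = mu := by abel
          have := sub_mem_of_isQuasiAdditive l S₂ hS₂ h42 h32 (by rw [e4]; exact hlmu)
          rw [e4] at this
          exact hmu2 this
    · have e5 : lam + lam + mu - (lam + lam) = mu := by abel
      have := sub_mem_of_isQuasiAdditive l S₂ hS₂ hA2 h2lam2 (by rw [e5]; exact hlmu)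
      rw [e5] at this
      exact hmu2 this
  · -- l(λ+μ) ≠ 0
    have hABS : lam + mu ∈ S := hS.2.2 lam mu hlamS hmuS hc
    rcases (hunion ▸ hABS : lam + mu ∈ S₁ ∪ S₂) with h1 | h2
    · have e6 : lam + mu - mu = lam := by abel
      have := sub_mem_of_isQuasiAdditive l S₁ hS₁ h1 hmu1 (by rw [e6]; exact hllam)
      rw [e6] at this
      exact hlam1 this
    · have e7 : lam + mu - lam = mu := by abel
      have := sub_mem_of_isQuasiAdditive l S₂ hS₂ h2 hlam2 (by rw [e7]; exact hlmu)
      rw [e7] at this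
      exact hmu2 this

end QuasiAdditive
end

section
/- Let M = ℤ^n be a lattice, let d : M → ℂ be an additive map, and let c : M × M → ℂ* be a function such that: (i) c(l,m) = c(m,l) whenever (d(l), d(m)) ≠ (−1, −1); and (ii) c(l,m)·c(l+m,n) = c(l,m+n)·c(m,n) whenever none of the four pairs (d(l), d(m)), (d(l+m), d(n)), (d(l), d(m+n)), (d(m), d(n)) equals (−1, −1). Then there exists a function b : M → ℂ* such that c(l,m)·b(l+m) = b(l)·b(m) for every pair (l,m) ∈ M × M with (d(l), d(m)) ≠ (−1, −1). -/
theorem cocycle_split {n : ℕ} (c' : (Fin n → ℤ) → (Fin n → ℤ) → ℂˣ)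
    (h0 : ∀ m, c' 0 m = 1) (h0' : ∀ m, c' m 0 = 1)
    (hs : ∀ l m, c' l m = c' m l)
    (hco : ∀ l m k, c' l m * c' (l + m) k = c' l (m + k) * c' m k) :
    ∃ b : (Fin n → ℤ) → ℂˣ, ∀ l m, c' l m * b (l + m) = b l * b m := by
  letI : Add ((Fin n → ℤ) × ℂˣ) := ⟨fun x y => (x.1 + y.1, x.2 * y.2 * c' x.1 y.1)⟩
  letI : Zero ((Fin n → ℤ) × ℂˣ) := ⟨(0, 1)⟩
  letI : Neg ((Fin n → ℤ) × ℂˣ) := ⟨fun x => (-x.1, (x.2 * c' x.1 (-x.1))⁻¹)⟩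
  letI instE : AddCommGroup ((Fin n → ℤ) × ℂˣ) :=
  { add := (· + ·)
    zero := 0
    neg := Neg.neg
    nsmul := nsmulRec
    zsmul := zsmulRec
    add_assoc := by
      intro a b c
      refine Prod.ext (add_assoc _ _ _) ?_
      show a.2 * b.2 * c' a.1 b.1 * c.2 * c' (a.1 + b.1) c.1
        = a.2 * (b.2 * c.2 * c' b.1 c.1) * c' a.1 (b.1 + c.1)
      have h := hco a.1 b.1 c.1
      calc a.2 * b.2 * c' a.1 b.1 * c.2 * c' (a.1 + b.1) c.1
          = a.2 * b.2 * c.2 * (c' a.1 b.1 * c' (a.1 + b.1) c.1) := by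
            simp only [mul_assoc, mul_comm, mul_left_comm]
        _ = a.2 * b.2 * c.2 * (c' a.1 (b.1 + c.1) * c' b.1 c.1) := by rw [h]
        _ = a.2 * (b.2 * c.2 * c' b.1 c.1) * c' a.1 (b.1 + c.1) := by
            simp only [mul_assoc, mul_comm, mul_left_comm]
    zero_add := by
      intro a
      refine Prod.ext (zero_add _) ?_
      show 1 * a.2 * c' 0 a.1 = a.2
      rw [h0, one_mul, mul_one]
    add_zero := by
      intro a
      refine Prod.ext (add_zero _) ?_
      show a.2 * 1 * c' a.1 0 = a.2
      rw [h0', mul_one, mul_one]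
    neg_add_cancel := by
      intro a
      refine Prod.ext (neg_add_cancel _) ?_
      show (a.2 * c' a.1 (-a.1))⁻¹ * a.2 * c' (-a.1) a.1 = 1
      rw [hs (-a.1) a.1]
      group
    add_comm := by
      intro a b
      refine Prod.ext (add_comm _ _) ?_
      show a.2 * b.2 * c' a.1 b.1 = b.2 * a.2 * c' b.1 a.1
      rw [hs a.1 b.1, mul_comm a.2 b.2] }
  letI : Module ℤ ((Fin n → ℤ) × ℂˣ) := AddCommGroup.toIntModule _
  let π : ((Fin n → ℤ) × ℂˣ) →+ (Fin n → ℤ) := AddMonoidHom.mk' Prod.fst (fun a b => rfl)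
  have hsurj : Function.Surjective π.toIntLinearMap := fun m => ⟨(m, 1), rfl⟩
  obtain ⟨s, hsec⟩ := Module.projective_lifting_property π.toIntLinearMap LinearMap.id hsurj
  have hfst : ∀ m, (s m).1 = m := fun m => LinearMap.congr_fun hsec m
  refine ⟨fun m => ((s m).2)⁻¹, ?_⟩
  intro l m
  have hadd : s (l + m) = s l + s m := map_add s l m
  have h2 : (s (l + m)).2 = (s l).2 * (s m).2 * c' l m := by
    rw [hadd]
    show (s l).2 * (s m).2 * c' (s l).1 (s m).1 = (s l).2 * (s m).2 * c' l m
    rw [hfst l, hfst m]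
  show c' l m * ((s (l + m)).2)⁻¹ = ((s l).2)⁻¹ * ((s m).2)⁻¹
  rw [h2]
  group
  exact mul_comm _ _


/-- Lemma 81: a symmetric "quasi-two-cocycle" `c` relative to the additive map `d` is a
"quasi-boundary": there is `b : M → ℂ*` with `c(l,m) = b(l)b(m)/b(l+m)` whenever
`(d(l), d(m)) ≠ (−1, −1)`. -/
theorem quasi_cocycle_is_quasi_boundary
    {n : ℕ} (d : (Fin n → ℤ) →+ ℂ) (c : (Fin n → ℤ) → (Fin n → ℤ) → ℂ)
    (hc_ne : ∀ l m : Fin n → ℤ, c l m ≠ 0)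
    (hsymm : ∀ l m : Fin n → ℤ, ¬(d l = -1 ∧ d m = -1) → c l m = c m l)
    (hcocycle : ∀ l m k : Fin n → ℤ,
      ¬(d l = -1 ∧ d m = -1) → ¬(d (l + m) = -1 ∧ d k = -1) →
      ¬(d l = -1 ∧ d (m + k) = -1) → ¬(d m = -1 ∧ d k = -1) →
      c l m * c (l + m) k = c l (m + k) * c m k) :
    ∃ b : (Fin n → ℤ) → ℂ, (∀ m : Fin n → ℤ, b m ≠ 0) ∧
      ∀ l m : Fin n → ℤ, ¬(d l = -1 ∧ d m = -1) → c l m * b (l + m) = b l * b m := by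
  classical
  have hκ : c 0 0 ≠ 0 := hc_ne 0 0
  have hd0 : d (0 : Fin n → ℤ) = 0 := map_zero d
  have h0good : ∀ m : Fin n → ℤ, ¬(d (0 : Fin n → ℤ) = -1 ∧ d m = -1) := by
    rintro m ⟨u, -⟩; rw [hd0] at u; norm_num at u
  have hc00 : ∀ m, c 0 m = c 0 0 := by
    intro m
    have h := hcocycle 0 0 m (h0good 0)
      (by rintro ⟨u, -⟩; rw [add_zero, hd0] at u; norm_num at u)
      (by rintro ⟨u, -⟩; rw [hd0] at u; norm_num at u) (h0good m)
    rw [add_zero, zero_add] at h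
    exact (mul_right_cancel₀ (hc_ne 0 m) h).symm
  have hcm0 : ∀ m, c m 0 = c 0 0 := by
    intro m
    rw [hsymm m 0 (by rintro ⟨-, v⟩; rw [hd0] at v; norm_num at v)]
    exact hc00 m
  -- normalized cocycle, kept opaque
  obtain ⟨c0, hc0e⟩ : ∃ f : (Fin n → ℤ) → (Fin n → ℤ) → ℂ,
      ∀ l m, f l m = c l m / c 0 0 := ⟨_, fun _ _ => rfl⟩
  have h0ne : ∀ l m, c0 l m ≠ 0 := fun l m => by
    rw [hc0e]; exact div_ne_zero (hc_ne l m) hκ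
  have h0symm : ∀ l m, ¬(d l = -1 ∧ d m = -1) → c0 l m = c0 m l := by
    intro l m h; rw [hc0e, hc0e, hsymm l m h]
  have h0co : ∀ l m k : Fin n → ℤ,
      ¬(d l = -1 ∧ d m = -1) → ¬(d (l + m) = -1 ∧ d k = -1) →
      ¬(d l = -1 ∧ d (m + k) = -1) → ¬(d m = -1 ∧ d k = -1) →
      c0 l m * c0 (l + m) k = c0 l (m + k) * c0 m k := by
    intro l m k h1 h2 h3 h4
    rw [hc0e, hc0e, hc0e, hc0e, div_mul_div_comm, div_mul_div_comm,
      hcocycle l m k h1 h2 h3 h4]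
  have h00 : ∀ m, c0 0 m = 1 := fun m => by rw [hc0e, hc00 m]; exact div_self hκ
  have h0m0 : ∀ m, c0 m 0 = 1 := fun m => by rw [hc0e, hcm0 m]; exact div_self hκ
  -- the extended cocycle, kept opaque
  obtain ⟨cv, hcve⟩ : ∃ f : (Fin n → ℤ) → (Fin n → ℤ) → ℂ, ∀ l m, f l m =
      if d l = -1 ∧ d m = -1 then c0 m (-m) / c0 (l + m) (-m) else c0 l m :=
    ⟨_, fun _ _ => rfl⟩
  have hvne : ∀ l m, cv l m ≠ 0 := by
    intro l m; rw [hcve]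
    split
    · exact div_ne_zero (h0ne _ _) (h0ne _ _)
    · exact h0ne _ _
  have hv0 : ∀ m, cv 0 m = 1 := by
    intro m; rw [hcve, if_neg (h0good m)]; exact h00 m
  have hvm0 : ∀ m, cv m 0 = 1 := by
    intro m
    rw [hcve, if_neg (by rintro ⟨-, v⟩; rw [hd0] at v; norm_num at v)]
    exact h0m0 m
  -- symmetry of the extended cocycle
  have hvsymm : ∀ l m, cv l m = cv m l := by
    intro l m
    rw [hcve, hcve]
    by_cases h : d l = -1 ∧ d m = -1
    · obtain ⟨ha, hb⟩ := h
      rw [if_pos (⟨ha, hb⟩ : d l = -1 ∧ d m = -1),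
        if_pos (⟨hb, ha⟩ : d m = -1 ∧ d l = -1)]
      have T1 := h0co (l + m) (-m) (-l)
        (by simp only [map_add, map_neg, ha, hb]; norm_num)
        (by simp only [map_add, map_neg, ha, hb]; norm_num)
        (by simp only [map_add, map_neg, ha, hb]; norm_num)
        (by simp only [map_add, map_neg, ha, hb]; norm_num)
      have T2 := h0co (m + l) (-l) (-m)
        (by simp only [map_add, map_neg, ha, hb]; norm_num)
        (by simp only [map_add, map_neg, ha, hb]; norm_num)
        (by simp only [map_add, map_neg, ha, hb]; norm_num)
        (by simp only [map_add, map_neg, ha, hb]; norm_num)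
      rw [show l + m + -m = l from by abel, show -m + -l = -(l + m) from by abel] at T1
      rw [show m + l + -l = m from by abel, show -l + -m = -(l + m) from by abel,
        show m + l = l + m from by abel] at T2
      have Ts : c0 (-m) (-l) = c0 (-l) (-m) := h0symm _ _
        (by simp only [map_neg, ha, hb]; norm_num)
      rw [show m + l = l + m from by abel, div_eq_div_iff (h0ne _ _) (h0ne _ _)]
      linear_combination T2 - T1 - c0 (l + m) (-(l + m)) * Ts
    · rw [if_neg h, if_neg (fun hh => h ⟨hh.2, hh.1⟩)]
      exact h0symm l m h
  -- cocycle identity for the extended cocycle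
  have hvco : ∀ l m k, cv l m * cv (l + m) k = cv l (m + k) * cv m k := by
    intro l m k
    rw [hcve, hcve, hcve, hcve]
    by_cases h1 : d l = -1 ∧ d m = -1
    · obtain ⟨ha, hb⟩ := h1
      have h2 : ¬(d (l + m) = -1 ∧ d k = -1) := by
        rintro ⟨u, -⟩; rw [map_add, ha, hb] at u; norm_num at u
      rw [if_pos (⟨ha, hb⟩ : d l = -1 ∧ d m = -1), if_neg h2]
      by_cases he : d k = -1
      · -- Case 4: P1, P4 bad
        rw [if_neg (by rintro ⟨-, v⟩; rw [map_add, hb, he] at v; norm_num at v),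
          if_pos (⟨hb, he⟩ : d m = -1 ∧ d k = -1)]
        have A := h0co (l + m) k (-k)
          (by simp only [map_add, map_neg, ha, hb, he]; norm_num)
          (by simp only [map_add, map_neg, ha, hb, he]; norm_num)
          (by simp only [map_add, map_neg, ha, hb, he]; norm_num)
          (by simp only [map_add, map_neg, ha, hb, he]; norm_num)
        rw [show k + -k = (0 : Fin n → ℤ) from by abel, h0m0, one_mul] at A
        have B := h0co l (m + k) (-(m + k))
          (by simp only [map_add, map_neg, ha, hb, he]; norm_num)
          (by simp only [map_add, map_neg, ha, hb, he]; norm_num)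
          (by simp only [map_add, map_neg, ha, hb, he]; norm_num)
          (by simp only [map_add, map_neg, ha, hb, he]; norm_num)
        rw [show m + k + -(m + k) = (0 : Fin n → ℤ) from by abel, h0m0, one_mul] at B
        have C := h0co (m + k) (-k) (-m)
          (by simp only [map_add, map_neg, ha, hb, he]; norm_num)
          (by simp only [map_add, map_neg, ha, hb, he]; norm_num)
          (by simp only [map_add, map_neg, ha, hb, he]; norm_num)
          (by simp only [map_add, map_neg, ha, hb, he]; norm_num)
        rw [show m + k + -k = m from by abel, show -k + -m = -(m + k) from by abel] at C
        have D := h0co (l + (m + k)) (-k) (-m)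
          (by simp only [map_add, map_neg, ha, hb, he]; norm_num)
          (by simp only [map_add, map_neg, ha, hb, he]; norm_num)
          (by simp only [map_add, map_neg, ha, hb, he]; norm_num)
          (by simp only [map_add, map_neg, ha, hb, he]; norm_num)
        rw [show l + (m + k) + -k = l + m from by abel,
          show -k + -m = -(m + k) from by abel] at D
        rw [show l + m + k = l + (m + k) from by abel] at A
        have hA' : c0 (l + m) k = c0 k (-k) / c0 (l + (m + k)) (-k) := by
          rw [eq_div_iff (h0ne _ _)]; exact A
        have hB' : c0 l (m + k) = c0 (m + k) (-(m + k)) / c0 (l + (m + k)) (-(m + k)) := by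
          rw [eq_div_iff (h0ne _ _)]; exact B
        rw [hA', hB', div_mul_div_comm, div_mul_div_comm,
          div_eq_div_iff (mul_ne_zero (h0ne _ _) (h0ne _ _)) (mul_ne_zero (h0ne _ _) (h0ne _ _))]
        linear_combination (c0 k (-k) * c0 (l + (m + k)) (-(m + k))) * C
          - (c0 k (-k) * c0 (m + k) (-(m + k))) * D
      · by_cases he0 : d k = 0
        · -- Case 3: P1, P3 bad
          rw [if_pos (⟨ha, by rw [map_add, hb, he0]; norm_num⟩ : d l = -1 ∧ d (m + k) = -1),
            if_neg (by rintro ⟨-, v⟩; exact he v)]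
          have A := h0co m k (-(m + k))
            (by simp only [map_add, map_neg, ha, hb, he0]; norm_num)
            (by simp only [map_add, map_neg, ha, hb, he0]; norm_num)
            (by simp only [map_add, map_neg, ha, hb, he0]; norm_num)
            (by simp only [map_add, map_neg, ha, hb, he0]; norm_num)
          rw [show k + -(m + k) = -m from by abel] at A
          have B := h0co (l + m) k (-(m + k))
            (by simp only [map_add, map_neg, ha, hb, he0]; norm_num)
            (by simp only [map_add, map_neg, ha, hb, he0]; norm_num)
            (by simp only [map_add, map_neg, ha, hb, he0]; norm_num)
            (by simp only [map_add, map_neg, ha, hb, he0]; norm_num)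
          rw [show k + -(m + k) = -m from by abel,
            show l + m + k = l + (m + k) from by abel] at B
          rw [div_mul_eq_mul_div, div_mul_eq_mul_div,
            div_eq_div_iff (h0ne _ _) (h0ne _ _)]
          linear_combination (c0 m (-m)) * B - (c0 (l + m) (-m)) * A
        · -- Case 2: only P1 bad
          have hP3 : ¬(d l = -1 ∧ d (m + k) = -1) := by
            rintro ⟨-, v⟩; rw [map_add, hb] at v; exact he0 (by linear_combination v)
          rw [if_neg hP3, if_neg (by rintro ⟨-, v⟩; exact he v)]
          have A := h0co (l + m) (-m) (m + k)
            (by simp only [map_add, map_neg, ha, hb]; norm_num)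
            (by rintro ⟨-, v⟩; rw [map_add, hb] at v; exact he0 (by linear_combination v))
            (by rintro ⟨-, v⟩; rw [show -m + (m + k) = k from by abel] at v; exact he v)
            (by rintro ⟨u, -⟩; rw [map_neg, hb] at u; norm_num at u)
          rw [show l + m + -m = l from by abel, show -m + (m + k) = k from by abel] at A
          have B := h0co m (-m) (m + k)
            (by simp only [map_neg, hb]; norm_num)
            (by rintro ⟨u, -⟩; rw [show m + -m = (0 : Fin n → ℤ) from by abel, hd0] at u; norm_num at u)
            (by rintro ⟨-, v⟩; rw [show -m + (m + k) = k from by abel] at v; exact he v)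
            (by rintro ⟨u, -⟩; rw [map_neg, hb] at u; norm_num at u)
          rw [show m + -m = (0 : Fin n → ℤ) from by abel, h00,
            show -m + (m + k) = k from by abel, mul_one] at B
          rw [div_mul_eq_mul_div, div_eq_iff (h0ne _ _)]
          linear_combination (c0 (l + m) k) * B - (c0 m k) * A
    · -- P1 good
      rw [if_neg h1]
      by_cases h4 : d m = -1 ∧ d k = -1
      · obtain ⟨hb, he⟩ := h4
        have hane : d l ≠ -1 := fun hha => h1 ⟨hha, hb⟩
        have h3 : ¬(d l = -1 ∧ d (m + k) = -1) := by
          rintro ⟨-, v⟩; rw [map_add, hb, he] at v; norm_num at v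
        rw [if_pos (⟨hb, he⟩ : d m = -1 ∧ d k = -1), if_neg h3]
        by_cases ha0 : d l = 0
        · -- Case 9: P2, P4 bad
          rw [if_pos (⟨by rw [map_add, ha0, hb]; norm_num, he⟩ : d (l + m) = -1 ∧ d k = -1)]
          have B := h0co l (m + k) (-k)
            (by simp only [map_add, map_neg, ha0, hb, he]; norm_num)
            (by simp only [map_add, map_neg, ha0, hb, he]; norm_num)
            (by simp only [map_add, map_neg, ha0, hb, he]; norm_num)
            (by simp only [map_add, map_neg, ha0, hb, he]; norm_num)
          rw [show m + k + -k = m from by abel] at B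
          rw [show l + m + k = l + (m + k) from by abel, ← mul_div_assoc, ← mul_div_assoc,
            div_eq_div_iff (h0ne _ _) (h0ne _ _)]
          linear_combination -(c0 k (-k)) * B
        · -- Case 7: only P4 bad
          have hP2 : ¬(d (l + m) = -1 ∧ d k = -1) := by
            rintro ⟨u, -⟩; rw [map_add, hb] at u; exact ha0 (by linear_combination u)
          rw [if_neg hP2]
          have A := h0co (l + m) k (-k)
            (by rintro ⟨u, -⟩; rw [map_add, hb] at u; exact ha0 (by linear_combination u))
            (by rintro ⟨-, v⟩; rw [map_neg, he] at v; norm_num at v)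
            (by rintro ⟨-, v⟩; rw [show k + -k = (0 : Fin n → ℤ) from by abel, hd0] at v; norm_num at v)
            (by rintro ⟨-, v⟩; rw [map_neg, he] at v; norm_num at v)
          rw [show k + -k = (0 : Fin n → ℤ) from by abel, h0m0, one_mul] at A
          have B := h0co l (m + k) (-k)
            (by simp only [map_add, hb, he]; rintro ⟨-, v⟩; norm_num at v)
            (by rintro ⟨-, v⟩; rw [map_neg, he] at v; norm_num at v)
            (by rintro ⟨u, v⟩; rw [show m + k + -k = m from by abel] at v; exact h1 ⟨u, v⟩)
            (by rintro ⟨-, v⟩; rw [map_neg, he] at v; norm_num at v)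
          rw [show m + k + -k = m from by abel,
            show l + (m + k) = l + m + k from by abel] at B
          rw [← mul_div_assoc, eq_div_iff (h0ne _ _)]
          linear_combination (c0 l (m + k)) * A - (c0 (l + m) k) * B
      · -- P4 good
        rw [if_neg h4]
        by_cases h2 : d (l + m) = -1 ∧ d k = -1
        · obtain ⟨hab, he⟩ := h2
          have hab' : d l + d m = -1 := by rw [← map_add]; exact hab
          have hbne : d m ≠ -1 := fun hhb => h4 ⟨hhb, he⟩
          rw [if_pos (⟨hab, he⟩ : d (l + m) = -1 ∧ d k = -1)]
          by_cases hb0 : d m = 0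
          · -- Case 8: P2, P3 bad
            have ha : d l = -1 := by linear_combination hab' - hb0
            rw [if_pos (⟨ha, by rw [map_add, hb0, he]; norm_num⟩ : d l = -1 ∧ d (m + k) = -1)]
            have C1 := h0co l m (-m)
              (by rintro ⟨-, v⟩; exact hbne v)
              (by rintro ⟨-, v⟩; rw [map_neg, hb0] at v; norm_num at v)
              (by rintro ⟨-, v⟩; rw [show m + -m = (0 : Fin n → ℤ) from by abel, hd0] at v; norm_num at v)
              (by rintro ⟨u, -⟩; exact hbne u)
            rw [show m + -m = (0 : Fin n → ℤ) from by abel, h0m0, one_mul] at C1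
            have C2 := h0co m k (-k)
              (by rintro ⟨u, -⟩; exact hbne u)
              (by simp only [map_add, map_neg, hb0, he]; norm_num)
              (by rintro ⟨-, v⟩; rw [show k + -k = (0 : Fin n → ℤ) from by abel, hd0] at v; norm_num at v)
              (by rintro ⟨-, v⟩; rw [map_neg, he] at v; norm_num at v)
            rw [show k + -k = (0 : Fin n → ℤ) from by abel, h0m0, one_mul] at C2
            have C3 := h0co (l + (m + k)) (-k) (-m)
              (by simp only [map_add, map_neg, ha, hb0, he]; norm_num)
              (by simp only [map_add, map_neg, ha, hb0, he]; norm_num)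
              (by simp only [map_add, map_neg, ha, hb0, he]; norm_num)
              (by simp only [map_add, map_neg, ha, hb0, he]; norm_num)
            rw [show l + (m + k) + -k = l + m from by abel,
              show -k + -m = -(m + k) from by abel] at C3
            have C4 := h0co (m + k) (-k) (-m)
              (by simp only [map_add, map_neg, ha, hb0, he]; norm_num)
              (by simp only [map_add, map_neg, ha, hb0, he]; norm_num)
              (by simp only [map_add, map_neg, ha, hb0, he]; norm_num)
              (by simp only [map_add, map_neg, ha, hb0, he]; norm_num)
            rw [show m + k + -k = m from by abel,
              show -k + -m = -(m + k) from by abel] at C4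
            have E1 : c0 l m = c0 m (-m) / c0 (l + m) (-m) := by
              rw [eq_div_iff (h0ne _ _)]; exact C1
            rw [show l + m + k = l + (m + k) from by abel, E1,
              div_mul_div_comm, div_mul_eq_mul_div,
              div_eq_div_iff (mul_ne_zero (h0ne _ _) (h0ne _ _)) (h0ne _ _)]
            linear_combination -(c0 m (-m) * c0 (l + (m + k)) (-(m + k))) * C2
              + (c0 (l + (m + k)) (-(m + k)) * c0 m k) * C4
              - (c0 m k * c0 (m + k) (-(m + k))) * C3
          · -- Case 5: only P2 bad
            have hP3 : ¬(d l = -1 ∧ d (m + k) = -1) := by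
              rintro ⟨u, v⟩; rw [map_add, he] at v; exact hb0 (by linear_combination v)
            rw [if_neg hP3]
            have A := h0co l (m + k) (-k)
              (by rintro ⟨u, v⟩; rw [map_add, he] at v; exact hb0 (by linear_combination v))
              (by rintro ⟨-, v⟩; rw [map_neg, he] at v; norm_num at v)
              (by rintro ⟨-, v⟩; rw [show m + k + -k = m from by abel] at v; exact hbne v)
              (by rintro ⟨-, v⟩; rw [map_neg, he] at v; norm_num at v)
            rw [show m + k + -k = m from by abel,
              show l + (m + k) = l + m + k from by abel] at A
            have B := h0co m k (-k)
              (by rintro ⟨u, -⟩; exact hbne u)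
              (by rintro ⟨-, v⟩; rw [map_neg, he] at v; norm_num at v)
              (by rintro ⟨-, v⟩; rw [show k + -k = (0 : Fin n → ℤ) from by abel, hd0] at v; norm_num at v)
              (by rintro ⟨-, v⟩; rw [map_neg, he] at v; norm_num at v)
            rw [show k + -k = (0 : Fin n → ℤ) from by abel, h0m0, one_mul] at B
            rw [← mul_div_assoc, div_eq_iff (h0ne _ _)]
            linear_combination -(c0 l m) * B - (c0 m k) * A
        · -- P2 good
          rw [if_neg h2]
          by_cases h3 : d l = -1 ∧ d (m + k) = -1
          · -- Case 6: only P3 bad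
            obtain ⟨ha, hbe⟩ := h3
            have hbe' : d m + d k = -1 := by rw [← map_add]; exact hbe
            have hbne : d m ≠ -1 := fun hhb => h1 ⟨ha, hhb⟩
            have hb0 : d m ≠ 0 := by
              intro hh
              exact h2 ⟨by rw [map_add, ha, hh]; norm_num, by linear_combination hbe' - hh⟩
            rw [if_pos (⟨ha, hbe⟩ : d l = -1 ∧ d (m + k) = -1)]
            have A := h0co (l + m) k (-(m + k))
              (by rintro ⟨u, -⟩; rw [map_add, ha] at u; exact hb0 (by linear_combination u))
              (by rintro ⟨-, v⟩; rw [map_neg, hbe] at v; norm_num at v)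
              (by rintro ⟨u, -⟩; rw [map_add, ha] at u; exact hb0 (by linear_combination u))
              (by rintro ⟨-, v⟩; rw [map_neg, hbe] at v; norm_num at v)
            rw [show k + -(m + k) = -m from by abel,
              show l + m + k = l + (m + k) from by abel] at A
            have B := h0co m k (-(m + k))
              (by rintro ⟨u, -⟩; exact hbne u)
              (by rintro ⟨-, v⟩; rw [map_neg, hbe] at v; norm_num at v)
              (by rintro ⟨u, -⟩; exact hbne u)
              (by rintro ⟨-, v⟩; rw [map_neg, hbe] at v; norm_num at v)
            rw [show k + -(m + k) = -m from by abel] at B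
            have C := h0co l m (-m)
              (by rintro ⟨-, v⟩; exact hbne v)
              (by rintro ⟨u, -⟩; rw [map_add, ha] at u; exact hb0 (by linear_combination u))
              (by rintro ⟨-, v⟩; rw [show m + -m = (0 : Fin n → ℤ) from by abel, hd0] at v; norm_num at v)
              (by rintro ⟨u, -⟩; exact hbne u)
            rw [show m + -m = (0 : Fin n → ℤ) from by abel, h0m0, one_mul] at C
            rw [div_mul_eq_mul_div, eq_div_iff (h0ne _ _)]
            linear_combination (c0 l m) * A + (c0 k (-(m + k))) * C - B
          · -- Case 1: all good
            rw [if_neg h3]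
            exact h0co l m k h1 h2 h3 h4
  -- lift to units and split
  obtain ⟨cu, hcue⟩ : ∃ f : (Fin n → ℤ) → (Fin n → ℤ) → ℂˣ,
      ∀ l m, ((f l m : ℂˣ) : ℂ) = cv l m :=
    ⟨fun l m => Units.mk0 (cv l m) (hvne l m), fun _ _ => rfl⟩
  obtain ⟨b', hb'⟩ := cocycle_split cu
    (fun m => Units.ext (by rw [hcue, hv0 m, Units.val_one]))
    (fun m => Units.ext (by rw [hcue, hvm0 m, Units.val_one]))
    (fun l m => Units.ext (by rw [hcue, hcue, hvsymm l m]))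
    (fun l m k => Units.ext (by
      rw [Units.val_mul, Units.val_mul, hcue, hcue, hcue, hcue]
      exact hvco l m k))
  refine ⟨fun m => c 0 0 * (b' m : ℂ), fun m => mul_ne_zero hκ (b' m).ne_zero, ?_⟩
  intro l m hgood
  have h := congrArg Units.val (hb' l m)
  rw [Units.val_mul, Units.val_mul, hcue] at h
  have hcvlm : cv l m = c l m / c 0 0 := by rw [hcve, if_neg hgood, hc0e]
  rw [hcvlm, div_mul_eq_mul_div, div_eq_iff hκ] at h
  show c l m * (c 0 0 * ((b' (l + m) : ℂˣ) : ℂ)) =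
    c 0 0 * ((b' l : ℂˣ) : ℂ) * (c 0 0 * ((b' m : ℂˣ) : ℂ))
  linear_combination (c 0 0) * h
end
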